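/- arXiv:2410.01476 — 2 statements merged into one kernel-verified Lean document; each statement's English description precedes it below -/
import Mathlib

section
/- Let N ≥ 1 and let Σ_1, …, Σ_N be positive definite real d×d matrices. For any real d×d matrices W_1, …, W_N satisfying the constraint ∑_{i=1}^N W_i = I, the matrix ∑_{i=1}^N W_i Σ_i W_iᵀ − (∑_{j=1}^N Σ_j^{-1})^{-1} is positive semidefinite. In other words, in the Loewner order the covariance ∑_i W_i Σ_i W_iᵀ of any unbiased weighted combination is bounded below by (∑_j Σ_j^{-1})^{-1}, the value achieved by the optimal weights W_i* = (∑_{j=1}^N Σ_j^{-1})^{-1} Σ_i^{-1}. -/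
open Matrix Finset

/-- Among all matrix weights with `∑ᵢ Wᵢ = I`, the covariance
`∑ᵢ Wᵢ Σᵢ Wᵢᵀ` is bounded below (in the Loewner order) by `(∑ⱼ Σⱼ⁻¹)⁻¹`. -/
theorem covariance_loewner_lower_bound
    (d N : ℕ) (hN : 1 ≤ N)
    (S : Fin N → Matrix (Fin d) (Fin d) ℝ)
    (hS : ∀ i, (S i).PosDef)
    (W : Fin N → Matrix (Fin d) (Fin d) ℝ)
    (hW : ∑ i, W i = (1 : Matrix (Fin d) (Fin d) ℝ)) :
    (∑ i, W i * S i * (W i)ᵀ - (∑ j, (S j)⁻¹)⁻¹).PosSemidef := by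
  set T : Matrix (Fin d) (Fin d) ℝ := ∑ j, (S j)⁻¹ with hT
  have hTpd : T.PosDef := by
    obtain ⟨i0⟩ : Nonempty (Fin N) := ⟨⟨0, hN⟩⟩
    have h1 : T = (S i0)⁻¹ + ∑ j ∈ univ.erase i0, (S j)⁻¹ := by
      rw [hT, ← Finset.add_sum_erase _ _ (mem_univ i0)]
    rw [h1]
    exact ((hS i0).inv).add_posSemidef
      (Finset.sum_induction _ _ (fun a b ha hb => ha.add hb) Matrix.PosSemidef.zero
        (fun j _ => ((hS j).inv).posSemidef))
  haveI : Invertible T := T.invertibleOfIsUnitDet hTpd.det_pos.ne'.isUnit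
  have hblock : (fromBlocks (∑ i, W i * S i * (W i)ᵀ)
      (1 : Matrix (Fin d) (Fin d) ℝ) (1 : Matrix (Fin d) (Fin d) ℝ)ᴴ T).PosSemidef := by
    have hsum : fromBlocks (∑ i, W i * S i * (W i)ᵀ)
        (1 : Matrix (Fin d) (Fin d) ℝ) (1 : Matrix (Fin d) (Fin d) ℝ)ᴴ T
        = ∑ i, fromBlocks (W i * S i * (W i)ᵀ) (W i) (W i)ᴴ ((S i)⁻¹) := by
      ext x y
      cases x <;> cases y <;>
        simp only [← hW, hT, Matrix.sum_apply, fromBlocks_apply₁₁, fromBlocks_apply₁₂,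
          fromBlocks_apply₂₁, fromBlocks_apply₂₂, conjTranspose_apply, star_trivial,
          transpose_apply]
    rw [hsum]
    refine Finset.sum_induction _ _ (fun a b ha hb => ha.add hb) Matrix.PosSemidef.zero
      (fun i _ => ?_)
    haveI : Invertible ((S i)⁻¹) := (S i)⁻¹.invertibleOfIsUnitDet (hS i).inv.det_pos.ne'.isUnit
    rw [Matrix.PosDef.fromBlocks₂₂ _ _ (hS i).inv]
    rw [Matrix.nonsing_inv_nonsing_inv _ (hS i).det_pos.ne'.isUnit,
      conjTranspose_eq_transpose_of_trivial, sub_self]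
    exact Matrix.PosSemidef.zero
  have := (Matrix.PosDef.fromBlocks₂₂ _ _ hTpd).mp hblock
  simpa using this
end

section
/- Let N ≥ 1, let Σ_1, …, Σ_N be positive definite real d×d matrices, and let W_1, …, W_N be arbitrary real d×d matrices. Then the matrix Cauchy–Schwarz-type inequality ∑_{i=1}^N W_i Σ_i W_iᵀ ⪰ (∑_{i=1}^N W_i) (∑_{j=1}^N Σ_j^{-1})^{-1} (∑_{i=1}^N W_i)ᵀ holds in the Loewner order; that is, the difference of the two sides is positive semidefinite. -/
open Matrix Finset

/-- The matrix Cauchy–Schwarz-type inequality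
`∑ᵢ Wᵢ Σᵢ Wᵢᵀ ⪰ (∑ᵢ Wᵢ) (∑ⱼ Σⱼ⁻¹)⁻¹ (∑ᵢ Wᵢ)ᵀ` in the Loewner order. -/
theorem matrix_cauchy_schwarz_weighted
    (d N : ℕ) (hN : 1 ≤ N)
    (S : Fin N → Matrix (Fin d) (Fin d) ℝ)
    (hS : ∀ i, (S i).PosDef)
    (W : Fin N → Matrix (Fin d) (Fin d) ℝ) :
    (∑ i, W i * S i * (W i)ᵀ
      - (∑ i, W i) * (∑ j, (S j)⁻¹)⁻¹ * (∑ i, W i)ᵀ).PosSemidef := by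
  have i0 : Fin N := ⟨0, hN⟩
  set T : Matrix (Fin d) (Fin d) ℝ := ∑ j, (S j)⁻¹ with hTdef
  set M : Matrix (Fin d) (Fin d) ℝ := ∑ i, W i with hMdef
  have hT : T.PosDef := by
    have h1 : ((S i0)⁻¹ + ∑ j ∈ Finset.univ.erase i0, (S j)⁻¹).PosDef := by
      refine ((hS i0).inv).add_posSemidef ?_
      refine Finset.sum_induction _ _ (fun a b ha hb => ha.add hb)
        (Matrix.PosSemidef.zero) (fun j _ => (hS j).inv.posSemidef)
    rwa [Finset.add_sum_erase _ (fun j => (S j)⁻¹) (Finset.mem_univ i0)] at h1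
  haveI := hT.isUnit.invertible
  have hTsymm : Tᵀ = T := by
    rw [← Matrix.conjTranspose_eq_transpose_of_trivial]; exact hT.isHermitian
  set A : Fin N → Matrix (Fin d) (Fin d) ℝ := fun i => W i - M * T⁻¹ * (S i)⁻¹ with hAdef
  have hMT : Mᵀ = ∑ i, (W i)ᵀ := by rw [hMdef, Matrix.transpose_sum]
  have key : ∑ i, A i * S i * (A i)ᵀ
      = ∑ i, W i * S i * (W i)ᵀ - M * T⁻¹ * Mᵀ := by
    have expand : ∀ i : Fin N, A i * S i * (A i)ᵀ
        = W i * S i * (W i)ᵀ - W i * (T⁻¹ * Mᵀ) - M * T⁻¹ * (W i)ᵀ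
          + M * T⁻¹ * ((S i)⁻¹ * (T⁻¹ * Mᵀ)) := by
      intro i
      haveI := (hS i).isUnit.invertible
      have hSsymm : (S i)ᵀ = S i := by
        rw [← Matrix.conjTranspose_eq_transpose_of_trivial]; exact (hS i).isHermitian
      have hAT : (A i)ᵀ = (W i)ᵀ - (S i)⁻¹ * (T⁻¹ * Mᵀ) := by
        simp [hAdef, Matrix.transpose_sub, Matrix.transpose_mul,
          Matrix.transpose_nonsing_inv, hTsymm, hSsymm, Matrix.mul_assoc]
      rw [hAT, hAdef]
      simp only [Matrix.sub_mul, Matrix.mul_sub, Matrix.mul_assoc,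
        Matrix.mul_inv_cancel_left_of_invertible, Matrix.inv_mul_cancel_left_of_invertible,
        Matrix.mul_inv_of_invertible, Matrix.inv_mul_of_invertible, Matrix.one_mul, one_mul]
      abel
    have e1 : ∑ i, W i * (T⁻¹ * Mᵀ) = M * (T⁻¹ * Mᵀ) := by
      rw [← Finset.sum_mul, ← hMdef]
    have e2 : ∑ i, M * T⁻¹ * (W i)ᵀ = M * T⁻¹ * Mᵀ := by
      rw [← Finset.mul_sum, ← hMT]
    have e3 : ∑ i, M * T⁻¹ * ((S i)⁻¹ * (T⁻¹ * Mᵀ)) = M * T⁻¹ * (T * (T⁻¹ * Mᵀ)) := by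
      rw [← Finset.mul_sum, ← Finset.sum_mul, ← hTdef]
    rw [Finset.sum_congr rfl fun i _ => expand i,
      Finset.sum_add_distrib, Finset.sum_sub_distrib, Finset.sum_sub_distrib, e1, e2, e3,
      Matrix.mul_inv_cancel_left_of_invertible]
    simp only [Matrix.mul_assoc]
    abel
  rw [show (∑ i, W i * S i * (W i)ᵀ - M * T⁻¹ * Mᵀ) = ∑ i, A i * S i * (A i)ᵀ from key.symm]
  refine Finset.sum_induction _ _ (fun a b ha hb => ha.add hb)
    (Matrix.PosSemidef.zero) (fun i _ => ?_)
  have := ((hS i).posSemidef).mul_mul_conjTranspose_same (A i)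
  rwa [Matrix.conjTranspose_eq_transpose_of_trivial] at this
end
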